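/- Let B be a Banach space, a < b real numbers, and F : ℝ → B a continuous function vanishing outside [a, b] with F(a) = F(b) = 0. Assume F is twice differentiable on (a, b), F'' is Bochner integrable on (δ, b) for every δ > 0, and ‖F''(ω)‖ ≤ M (ω − a)^{-3/2} for ω near a. Then ‖∫_a^b e^{-i t ω} F(ω) dω‖ = O(t^{-3/2}) as t → +∞. -/

import Mathlib

/-! Integrating `‖F''(ω)‖ ≤ M (ω - a)^(-3/2)` gives `‖F'(ω)‖ ≲ (ω - a)^(-1/2)` near `a`, and
integrating again from `a`, where `F` vanishes, gives `‖F ω‖ ≲ (ω - a)^(1/2)`.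
Split the integral at `a + δ` with `δ ≍ 1/t`. The piece over `[a, a + δ]` is `O(δ^(3/2))`.
On `[a + δ, b]` integrate by parts twice: the boundary terms are `‖F(a + δ)‖ / t` and
`‖F'(a + δ)‖ / t²`, and the remaining integral is at most `t⁻² ∫ ‖F''‖ ≲ t⁻² δ^(-1/2)`.
All of these are `O(t^(-3/2))`. -/

open MeasureTheory Set
open scoped Interval

section PowerIntegrals

variable {a x y p : ℝ}

theorem integral_sub_rpow (h : -1 < p ∨ p ≠ -1 ∧ (0 : ℝ) ∉ [[x - a, y - a]]) :
    ∫ s in x..y, (s - a) ^ p = ((y - a) ^ (p + 1) - (x - a) ^ (p + 1)) / (p + 1) := by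
  rw [intervalIntegral.integral_comp_sub_right (fun s => s ^ p), integral_rpow h]

theorem intervalIntegrable_sub_rpow (h : -1 < p ∨ (0 : ℝ) ∉ [[x - a, y - a]]) :
    IntervalIntegrable (fun s => (s - a) ^ p) volume x y := by
  have : IntervalIntegrable (fun s => s ^ p) volume (x - a) (y - a) := by
    rcases h with h | h
    · exact intervalIntegral.intervalIntegrable_rpow' h
    · exact intervalIntegral.intervalIntegrable_rpow (Or.inr h)
  simpa using this.comp_sub_right a

theorem zero_notMem_uIcc_sub (hax : a < x) (hxy : x ≤ y) : (0 : ℝ) ∉ [[x - a, y - a]] := by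
  rw [uIcc_of_le (by linarith)]
  exact fun h => by linarith [h.1]

theorem rpow_neg_half_eq_inv_sqrt {u : ℝ} (hu : 0 ≤ u) : u ^ (-(1 / 2) : ℝ) = (√u)⁻¹ := by
  rw [Real.rpow_neg hu, Real.sqrt_eq_rpow]

theorem integral_sub_rpow_neg_three_halves (hax : a < x) (hxy : x ≤ y) :
    ∫ s in x..y, (s - a) ^ (-(3 / 2) : ℝ) = 2 / √(x - a) - 2 / √(y - a) := by
  rw [integral_sub_rpow (Or.inr ⟨by norm_num, zero_notMem_uIcc_sub hax hxy⟩),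
    show -(3 / 2) + 1 = -(1 / 2 : ℝ) by norm_num, rpow_neg_half_eq_inv_sqrt (by linarith),
    rpow_neg_half_eq_inv_sqrt (by linarith)]
  ring

theorem integral_inv_sqrt_sub (hax : a ≤ x) (hxy : x ≤ y) :
    ∫ s in x..y, (√(s - a))⁻¹ = 2 * √(y - a) - 2 * √(x - a) := by
  rw [intervalIntegral.integral_congr (g := fun s => (s - a) ^ (-(1 / 2) : ℝ)),
    integral_sub_rpow (Or.inl (by norm_num)), show -(1 / 2) + 1 = (1 / 2 : ℝ) by norm_num,
    ← Real.sqrt_eq_rpow, ← Real.sqrt_eq_rpow]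
  · ring
  · intro s hs
    rw [uIcc_of_le hxy] at hs
    exact (rpow_neg_half_eq_inv_sqrt (by linarith [hs.1])).symm

theorem intervalIntegrable_inv_sqrt_sub (hax : a ≤ x) (hxy : x ≤ y) :
    IntervalIntegrable (fun s => (√(s - a))⁻¹) volume x y := by
  refine (intervalIntegrable_sub_rpow (a := a) (p := -(1 / 2)) (Or.inl (by norm_num))).congr_uIoo
    fun s hs => ?_
  rw [uIoo_of_le hxy] at hs
  exact rpow_neg_half_eq_inv_sqrt (by linarith [hs.1])

end PowerIntegrals

section NormBounds

variable {E : Type*} [NormedAddCommGroup E] {f : ℝ → E}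

theorem nonneg_of_norm_le_mul_rpow {v : E} {M u p : ℝ} (hu : 0 < u) (h : ‖v‖ ≤ M * u ^ p) :
    0 ≤ M :=
  (mul_nonneg_iff_of_pos_right (Real.rpow_pos_of_pos hu p)).mp ((norm_nonneg v).trans h)

theorem integral_norm_le_of_norm_le_rpow {a x c y M : ℝ} (hax : a < x) (hxc : x ≤ c)
    (hcy : c ≤ y) (hf : IntervalIntegrable f volume x y)
    (hbound : ∀ s ∈ Icc x c, ‖f s‖ ≤ M * (s - a) ^ (-(3 / 2) : ℝ)) :
    ∫ s in x..y, ‖f s‖ ≤ 2 * M / √(x - a) + ∫ s in c..y, ‖f s‖ := by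
  have hM := nonneg_of_norm_le_mul_rpow (by linarith) (hbound c ⟨hxc, le_rfl⟩)
  have hxc' : IntervalIntegrable f volume x c := hf.mono_set (by
    rw [uIcc_of_le hxc, uIcc_of_le (hxc.trans hcy)]; exact Icc_subset_Icc_right hcy)
  have hcy' : IntervalIntegrable f volume c y := hf.mono_set (by
    rw [uIcc_of_le hcy, uIcc_of_le (hxc.trans hcy)]; exact Icc_subset_Icc_left hxc)
  have hnear : ∫ s in x..c, ‖f s‖ ≤ 2 * M / √(x - a) - 2 * M / √(c - a) :=
    calc ∫ s in x..c, ‖f s‖ ≤ ∫ s in x..c, M * (s - a) ^ (-(3 / 2) : ℝ) :=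
          intervalIntegral.integral_mono_on hxc hxc'.norm
            ((intervalIntegrable_sub_rpow (Or.inr (zero_notMem_uIcc_sub hax hxc))).const_mul M)
            hbound
      _ = 2 * M / √(x - a) - 2 * M / √(c - a) := by
        rw [intervalIntegral.integral_const_mul, integral_sub_rpow_neg_three_halves hax hxc]
        ring
  rw [← intervalIntegral.integral_add_adjacent_intervals hxc'.norm hcy'.norm]
  have : 0 ≤ 2 * M / √(c - a) := by positivity
  linarith

end NormBounds

section MeanValue

variable {E : Type*} [NormedAddCommGroup E] [NormedSpace ℝ E] [CompleteSpace E] {f f' : ℝ → E}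

theorem norm_sub_le_integral_of_norm_deriv_le {g : ℝ → ℝ} {x y : ℝ} (hxy : x ≤ y)
    (hf : ContinuousOn f (Icc x y)) (hderiv : ∀ s ∈ Ioo x y, HasDerivAt f (f' s) s)
    (hf' : AEStronglyMeasurable f' (volume.restrict (Ioc x y)))
    (hbound : ∀ s ∈ Ioo x y, ‖f' s‖ ≤ g s) (hg : IntervalIntegrable g volume x y) :
    ‖f y - f x‖ ≤ ∫ s in x..y, g s := by
  have hbound_ae : ∀ᵐ s ∂volume.restrict (Ioc x y), ‖f' s‖ ≤ g s := by
    rw [← Measure.restrict_congr_set Ioo_ae_eq_Ioc]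
    exact ae_restrict_of_forall_mem measurableSet_Ioo hbound
  have hint : IntervalIntegrable f' volume x y :=
    hg.mono_fun' (by rwa [uIoc_of_le hxy]) (by rwa [uIoc_of_le hxy])
  rw [← intervalIntegral.integral_eq_sub_of_hasDerivAt_of_le hxy hf hderiv hint]
  exact intervalIntegral.norm_integral_le_of_norm_le hxy
    ((ae_restrict_iff' measurableSet_Ioc).mp hbound_ae) hg

theorem norm_le_div_sqrt_of_norm_deriv_le_rpow {a c M x : ℝ}
    (hderiv : ∀ s ∈ Ioc a c, HasDerivAt f (f' s) s)
    (hf' : ∀ x ∈ Ioc a c, AEStronglyMeasurable f' (volume.restrict (Ioc x c)))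
    (hbound : ∀ s ∈ Ioc a c, ‖f' s‖ ≤ M * (s - a) ^ (-(3 / 2) : ℝ)) (hx : x ∈ Ioc a c) :
    ‖f x‖ ≤ (‖f c‖ * √(c - a) + 2 * M) / √(x - a) := by
  obtain ⟨hax, hxc⟩ := hx
  have hac : a < c := hax.trans_le hxc
  have hM := nonneg_of_norm_le_mul_rpow (sub_pos.2 hac) (hbound c ⟨hac, le_rfl⟩)
  have hsub : Icc x c ⊆ Ioc a c := fun s hs => ⟨hax.trans_le hs.1, hs.2⟩
  have hdiff : ‖f c - f x‖ ≤ 2 * M / √(x - a) - 2 * M / √(c - a) :=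
    calc ‖f c - f x‖ ≤ ∫ s in x..c, M * (s - a) ^ (-(3 / 2) : ℝ) :=
          norm_sub_le_integral_of_norm_deriv_le hxc
            (fun s hs => (hderiv s (hsub hs)).continuousAt.continuousWithinAt)
            (fun s hs => hderiv s (hsub (Ioo_subset_Icc_self hs))) (hf' x ⟨hax, hxc⟩)
            (fun s hs => hbound s (hsub (Ioo_subset_Icc_self hs)))
            ((intervalIntegrable_sub_rpow (Or.inr (zero_notMem_uIcc_sub hax hxc))).const_mul M)
      _ = 2 * M / √(x - a) - 2 * M / √(c - a) := by
        rw [intervalIntegral.integral_const_mul, integral_sub_rpow_neg_three_halves hax hxc]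
        ring
  have hfc : ‖f c‖ ≤ ‖f c‖ * √(c - a) / √(x - a) := by
    rw [mul_div_assoc]
    exact le_mul_of_one_le_right (norm_nonneg _)
      ((one_le_div (Real.sqrt_pos.2 (sub_pos.2 hax))).2 (Real.sqrt_le_sqrt (by linarith)))
  have hMc : 0 ≤ 2 * M / √(c - a) := by positivity
  calc ‖f x‖ ≤ ‖f c‖ + ‖f c - f x‖ := by
        simpa only [norm_sub_rev] using norm_le_norm_add_norm_sub' (f x) (f c)
    _ ≤ ‖f c‖ * √(c - a) / √(x - a) + 2 * M / √(x - a) := by linarith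
    _ = (‖f c‖ * √(c - a) + 2 * M) / √(x - a) := by ring

theorem norm_le_mul_sqrt_of_norm_deriv_le_div_sqrt {a c K : ℝ} (hac : a ≤ c)
    (hf : ContinuousOn f (Icc a c)) (hfa : f a = 0) (hderiv : ∀ s ∈ Ioo a c, HasDerivAt f (f' s) s)
    (hf' : AEStronglyMeasurable f' (volume.restrict (Ioc a c)))
    (hbound : ∀ s ∈ Ioo a c, ‖f' s‖ ≤ K / √(s - a)) : ‖f c‖ ≤ 2 * K * √(c - a) := by
  have hg : IntervalIntegrable (fun s => K / √(s - a)) volume a c := by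
    simpa only [div_eq_mul_inv] using (intervalIntegrable_inv_sqrt_sub le_rfl hac).const_mul K
  have h := norm_sub_le_integral_of_norm_deriv_le hac hf hderiv hf' hbound hg
  simp_rw [hfa, sub_zero, div_eq_mul_inv, intervalIntegral.integral_const_mul,
    integral_inv_sqrt_sub le_rfl hac, sub_self, Real.sqrt_zero] at h
  linarith

theorem exists_norm_le_div_sqrt_and_norm_le_mul_sqrt {f'' : ℝ → E} {a c M : ℝ}
    (hf : ContinuousOn f (Icc a c)) (hfa : f a = 0)
    (hd1 : ∀ s ∈ Ioc a c, HasDerivAt f (f' s) s) (hd2 : ∀ s ∈ Ioc a c, HasDerivAt f' (f'' s) s)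
    (hf'' : ∀ x ∈ Ioc a c, AEStronglyMeasurable f'' (volume.restrict (Ioc x c)))
    (hbound : ∀ s ∈ Ioc a c, ‖f'' s‖ ≤ M * (s - a) ^ (-(3 / 2) : ℝ)) :
    ∃ K, (∀ x ∈ Ioc a c, ‖f' x‖ ≤ K / √(x - a)) ∧ ∀ x ∈ Icc a c, ‖f x‖ ≤ 2 * K * √(x - a) := by
  have hf' : ∀ x ∈ Ioc a c, ‖f' x‖ ≤ (‖f' c‖ * √(c - a) + 2 * M) / √(x - a) :=
    fun x hx => norm_le_div_sqrt_of_norm_deriv_le_rpow hd2 hf'' hbound hx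
  refine ⟨_, hf', fun x hx => norm_le_mul_sqrt_of_norm_deriv_le_div_sqrt hx.1
    (hf.mono (Icc_subset_Icc_right hx.2)) hfa (fun s hs => hd1 s ⟨hs.1, hs.2.le.trans hx.2⟩)
    (((HasDerivAt.continuousOn hd2).mono (Ioc_subset_Ioc_right hx.2)).aestronglyMeasurable
      measurableSet_Ioc) (fun s hs => hf' s ⟨hs.1, hs.2.le.trans hx.2⟩)⟩

theorem exists_continuousOn_Icc_eqOn_Ico {x y : ℝ} (hxy : x ≤ y)
    (hderiv : ∀ s ∈ Ico x y, HasDerivAt f (f' s) s) (hf' : IntervalIntegrable f' volume x y) :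
    ∃ g : ℝ → E, ContinuousOn g (Icc x y) ∧ EqOn g f (Ico x y) := by
  refine ⟨fun s => f x + ∫ u in x..s, f' u, ?_, fun s hs => ?_⟩
  · refine continuousOn_const.add ?_
    simpa only [uIcc_of_le hxy] using
      intervalIntegral.continuousOn_primitive_interval' hf' left_mem_uIcc
  · have hsub : Icc x s ⊆ Ico x y := Icc_subset_Ico_right hs.2
    show f x + ∫ u in x..s, f' u = f s
    rw [intervalIntegral.integral_eq_sub_of_hasDerivAt_of_le hs.1
      (fun u hu => (hderiv u (hsub hu)).continuousAt.continuousWithinAt)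
      (fun u hu => hderiv u (hsub (Ioo_subset_Icc_self hu)))
      (hf'.mono_set (by
        rw [uIcc_of_le hs.1, uIcc_of_le hxy]; exact Icc_subset_Icc_right hs.2.le))]
    abel

end MeanValue

section FourierIntegration

variable {V : Type*} [NormedAddCommGroup V] [NormedSpace ℂ V] {f f' f'' : ℝ → V} {t x y : ℝ}

theorem norm_cexp_neg_I_mul (t s : ℝ) : ‖Complex.exp (-Complex.I * t * s)‖ = 1 := by
  rw [show -Complex.I * t * s = ((-(t * s) : ℝ) : ℂ) * Complex.I by push_cast; ring]
  exact Complex.norm_exp_ofReal_mul_I _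

theorem hasDerivAt_cexp_neg_I_mul (t s : ℝ) :
    HasDerivAt (fun s : ℝ => Complex.exp (-Complex.I * t * s))
      (-Complex.I * t * Complex.exp (-Complex.I * t * s)) s := by
  have h := ((hasDerivAt_id s).ofReal_comp.const_mul (-Complex.I * t)).cexp
  simpa [mul_comm] using h

theorem norm_integral_cexp_smul_le (hxy : x ≤ y) :
    ‖∫ s in x..y, Complex.exp (-Complex.I * t * s) • f s‖ ≤ ∫ s in x..y, ‖f s‖ :=
  (intervalIntegral.norm_integral_le_integral_norm hxy).trans_eq <| by
    simp_rw [norm_smul, norm_cexp_neg_I_mul, one_mul]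

variable [CompleteSpace V]

theorem integral_cexp_smul_eq (ht : t ≠ 0) (hxy : x ≤ y) (hf : ContinuousOn f (Icc x y))
    (hderiv : ∀ s ∈ Ioo x y, HasDerivAt f (f' s) s) (hf' : IntervalIntegrable f' volume x y) :
    ∫ s in x..y, Complex.exp (-Complex.I * t * s) • f s =
      (Complex.I / t) • (Complex.exp (-Complex.I * t * y) • f y
        - Complex.exp (-Complex.I * t * x) • f x
        - ∫ s in x..y, Complex.exp (-Complex.I * t * s) • f' s) := by
  have hu : ∀ s : ℝ, HasDerivAt (fun s : ℝ => Complex.I / t * Complex.exp (-Complex.I * t * s))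
      (Complex.exp (-Complex.I * t * s)) s := by
    intro s
    refine ((hasDerivAt_cexp_neg_I_mul t s).const_mul (Complex.I / t)).congr_deriv ?_
    have : (t : ℂ) ≠ 0 := Complex.ofReal_ne_zero.2 ht
    field_simp
    linear_combination -Complex.I_sq
  have h := intervalIntegral.integral_smul_deriv_eq_deriv_smul_of_hasDerivAt
    (fun s _ => (hu s).continuousAt.continuousWithinAt) (by rwa [uIcc_of_le hxy])
    (fun s _ => hu s) (by rwa [min_eq_left hxy, max_eq_right hxy])
    ((Complex.continuous_exp.comp (by fun_prop)).intervalIntegrable x y) hf'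
  simp_rw [mul_smul, intervalIntegral.integral_smul] at h
  rw [smul_sub, smul_sub, h]
  abel

theorem norm_integral_cexp_smul_le_of_hasDerivAt (ht : 0 < t) (hxy : x ≤ y)
    (hf : ContinuousOn f (Icc x y)) (hderiv : ∀ s ∈ Ioo x y, HasDerivAt f (f' s) s)
    (hf' : IntervalIntegrable f' volume x y) :
    ‖∫ s in x..y, Complex.exp (-Complex.I * t * s) • f s‖ ≤
      (‖f x‖ + ‖f y‖ + ‖∫ s in x..y, Complex.exp (-Complex.I * t * s) • f' s‖) / t := by
  rw [integral_cexp_smul_eq ht.ne' hxy hf hderiv hf', norm_smul, norm_div, Complex.norm_I,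
    Complex.norm_real, Real.norm_of_nonneg ht.le, one_div_mul_eq_div]
  gcongr
  refine (norm_sub_le _ _).trans ?_
  gcongr
  refine (norm_sub_le _ _).trans_eq ?_
  simp only [norm_smul, norm_cexp_neg_I_mul, one_mul, add_comm]

theorem norm_integral_cexp_smul_le_of_hasDerivAt_of_hasDerivAt (ht : 0 < t) (hxy : x < y)
    (hf : ContinuousOn f (Icc x y)) (hderiv : ∀ s ∈ Ioo x y, HasDerivAt f (f' s) s)
    (hderiv' : ∀ s ∈ Ico x y, HasDerivAt f' (f'' s) s) (hf'' : IntervalIntegrable f'' volume x y) :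
    ‖∫ s in x..y, Complex.exp (-Complex.I * t * s) • f s‖ ≤
      (‖f x‖ + ‖f y‖) / t + 2 * (‖f' x‖ + ∫ s in x..y, ‖f'' s‖) / t ^ 2 := by
  -- `f' y` is unrelated to `f'` on `[x, y)`: integrate by parts against the continuous
  -- extension of `f'` to `[x, y]` instead.
  obtain ⟨g, hg, hgf'⟩ := exists_continuousOn_Icc_eqOn_Ico hxy.le hderiv' hf''
  have hgx : g x = f' x := hgf' ⟨le_rfl, hxy⟩
  have hfg : ∀ s ∈ Ioo x y, HasDerivAt f (g s) s := fun s hs =>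
    hgf' (Ioo_subset_Ico_self hs) ▸ hderiv s hs
  have hg' : ∀ s ∈ Ioo x y, HasDerivAt g (f'' s) s := fun s hs =>
    (hderiv' s (Ioo_subset_Ico_self hs)).congr_of_eventuallyEq <| by
      filter_upwards [Ioo_mem_nhds hs.1 hs.2] with u hu using hgf' (Ioo_subset_Ico_self hu)
  have hgy : ‖g y‖ ≤ ‖f' x‖ + ∫ s in x..y, ‖f'' s‖ := by
    rw [← sub_add_cancel (g y) (g x), ← intervalIntegral.integral_eq_sub_of_hasDerivAt_of_le
      hxy.le hg hg' hf'', hgx, add_comm]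
    exact (norm_add_le _ _).trans
      (add_le_add_right (intervalIntegral.norm_integral_le_integral_norm hxy.le) _)
  have hgint : IntervalIntegrable g volume x y :=
    hg.intervalIntegrable_of_Icc hxy.le
  calc ‖∫ s in x..y, Complex.exp (-Complex.I * t * s) • f s‖
      ≤ (‖f x‖ + ‖f y‖ + ‖∫ s in x..y, Complex.exp (-Complex.I * t * s) • g s‖) / t :=
        norm_integral_cexp_smul_le_of_hasDerivAt ht hxy.le hf hfg hgint
    _ ≤ (‖f x‖ + ‖f y‖ + (‖g x‖ + ‖g y‖ + ∫ s in x..y, ‖f'' s‖) / t) / t := by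
        gcongr
        refine (norm_integral_cexp_smul_le_of_hasDerivAt ht hxy.le hg hg' hf'').trans ?_
        gcongr
        exact norm_integral_cexp_smul_le hxy.le
    _ ≤ (‖f x‖ + ‖f y‖ + 2 * (‖f' x‖ + ∫ s in x..y, ‖f'' s‖) / t) / t := by
        rw [hgx]
        gcongr
        linarith
    _ = (‖f x‖ + ‖f y‖) / t + 2 * (‖f' x‖ + ∫ s in x..y, ‖f'' s‖) / t ^ 2 := by
        field_simp

theorem norm_integral_cexp_smul_le_of_sqrt_bounds {a b c δ K M : ℝ} (ht : 0 < t) (hδ : 0 < δ)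
    (hδc : a + δ ≤ c) (hcb : c < b) (hf : ContinuousOn f (Icc a b)) (hfb : f b = 0)
    (hd1 : ∀ s ∈ Ioo a b, HasDerivAt f (f' s) s) (hd2 : ∀ s ∈ Ioo a b, HasDerivAt f' (f'' s) s)
    (hf'' : IntervalIntegrable f'' volume (a + δ) b)
    (hfbd : ∀ ω ∈ Icc a (a + δ), ‖f ω‖ ≤ 2 * K * √(ω - a)) (hf'bd : ‖f' (a + δ)‖ ≤ K / √δ)
    (hf''bd : ∀ s ∈ Icc (a + δ) c, ‖f'' s‖ ≤ M * (s - a) ^ (-(3 / 2) : ℝ)) :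
    ‖∫ ω in a..b, Complex.exp (-Complex.I * t * ω) • f ω‖ ≤ 2 * K * (δ * √δ) + 2 * K * √δ / t
      + (2 * (K + 2 * M) / √δ + 2 * ∫ s in c..b, ‖f'' s‖) / t ^ 2 := by
  have hax : a < a + δ := by linarith
  have hxb : a + δ < b := hδc.trans_lt hcb
  have hK : 0 ≤ K := by
    have := (norm_nonneg _).trans hf'bd
    rwa [le_div_iff₀ (Real.sqrt_pos.2 hδ), zero_mul] at this
  have hEf : ContinuousOn (fun ω : ℝ => Complex.exp (-Complex.I * t * ω) • f ω) (Icc a b) :=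
    (by fun_prop : Continuous fun ω : ℝ => Complex.exp (-Complex.I * t * ω)).continuousOn.smul hf
  rw [← intervalIntegral.integral_add_adjacent_intervals (b := a + δ)
    ((hEf.mono (Icc_subset_Icc_right hxb.le)).intervalIntegrable_of_Icc hax.le)
    ((hEf.mono (Icc_subset_Icc_left hax.le)).intervalIntegrable_of_Icc hxb.le)]
  have hnear : ‖∫ ω in a..a + δ, Complex.exp (-Complex.I * t * ω) • f ω‖ ≤
      2 * K * (δ * √δ) := by
    refine (intervalIntegral.norm_integral_le_of_norm_le_const (C := 2 * K * √δ)
      fun ω hω => ?_).trans_eq ?_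
    · rw [uIoc_of_le hax.le] at hω
      rw [norm_smul, norm_cexp_neg_I_mul, one_mul]
      refine (hfbd ω ⟨hω.1.le, hω.2⟩).trans ?_
      gcongr
      linarith [hω.2]
    · rw [add_sub_cancel_left, abs_of_pos hδ]
      ring
  have hfar := norm_integral_cexp_smul_le_of_hasDerivAt_of_hasDerivAt ht hxb
    (hf.mono (Icc_subset_Icc_left hax.le)) (fun s hs => hd1 s ⟨hax.trans hs.1, hs.2⟩)
    (fun s hs => hd2 s ⟨hax.trans_le hs.1, hs.2⟩) hf''
  have hf''near := integral_norm_le_of_norm_le_rpow hax hδc hcb.le hf'' hf''bd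
  have hfx := hfbd (a + δ) ⟨hax.le, le_rfl⟩
  simp only [add_sub_cancel_left] at hfx hf''near
  rw [hfb, norm_zero, add_zero] at hfar
  calc _ ≤ ‖∫ ω in a..a + δ, Complex.exp (-Complex.I * t * ω) • f ω‖
        + ‖∫ ω in a + δ..b, Complex.exp (-Complex.I * t * ω) • f ω‖ := norm_add_le _ _
    _ ≤ 2 * K * (δ * √δ) + (2 * K * √δ / t
        + 2 * (K / √δ + (2 * M / √δ + ∫ s in c..b, ‖f'' s‖)) / t ^ 2) := by
      gcongr
      exact hfar.trans (by gcongr)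
    _ = _ := by ring

end FourierIntegration

theorem rpow_neg_three_halves_eq {t : ℝ} (ht : 0 < t) : t ^ (-(3 / 2) : ℝ) = (t * √t)⁻¹ := by
  rw [Real.rpow_neg ht.le, show (3 / 2 : ℝ) = 1 + 1 / 2 by norm_num, Real.rpow_add ht,
    Real.rpow_one, Real.sqrt_eq_rpow]

-- With `δ = d / t`, every term of `norm_integral_cexp_smul_le_of_sqrt_bounds` is `O(t^(-3/2))`.
theorem scaling_le_mul_rpow_neg_three_halves {d t A B C D : ℝ} (hd : 0 < d) (ht : 1 ≤ t)
    (hD : 0 ≤ D) :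
    A * (d / t * √(d / t)) + B * √(d / t) / t + (C / √(d / t) + D) / t ^ 2 ≤
      (A * (d * √d) + B * √d + C / √d + D) * t ^ (-(3 / 2) : ℝ) := by
  have ht0 : 0 < t := one_pos.trans_le ht
  have hsq : √t ^ 2 = t := Real.sq_sqrt ht0.le
  have hD' : D / t ^ 2 ≤ D / (t * √t) := by
    gcongr
    nlinarith [Real.sqrt_le_sqrt ht, Real.sqrt_one]
  rw [rpow_neg_three_halves_eq ht0, Real.sqrt_div' _ ht0.le, add_div (C / _), add_mul]
  have : A * (d / t * (√d / √t)) + B * (√d / √t) / t + C / (√d / √t) / t ^ 2 =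
      (A * (d * √d) + B * √d + C / √d) * (t * √t)⁻¹ := by
    field_simp
    rw [hsq]
    ring
  linarith [mul_comm D (t * √t)⁻¹, div_eq_mul_inv D (t * √t)]

theorem stmt4_general {B : Type*} [NormedAddCommGroup B] [NormedSpace ℂ B] [CompleteSpace B]
    (a b : ℝ) (hab : a < b) (F F' F'' : ℝ → B) (M : ℝ)
    (hFc : Continuous F)
    (hFa : F a = 0) (hFb : F b = 0)
    (hd1 : ∀ ω ∈ Ioo a b, HasDerivAt F (F' ω) ω)
    (hd2 : ∀ ω ∈ Ioo a b, HasDerivAt F' (F'' ω) ω)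
    (hint : ∀ δ : ℝ, 0 < δ → IntegrableOn F'' (Ioo (a + δ) b))
    (hM : ∃ c : ℝ, a < c ∧ ∀ ω ∈ Ioo a c, ‖F'' ω‖ ≤ M * (ω - a) ^ (-(3 / 2) : ℝ)) :
    ∃ C : ℝ, ∀ t : ℝ, 1 ≤ t →
      ‖∫ ω in a..b, Complex.exp (-Complex.I * t * ω) • F ω‖ ≤ C * t ^ (-(3 / 2) : ℝ) := by
  obtain ⟨c, hac, hMc⟩ := hM
  obtain ⟨c₀, hac₀, hc₀c, hc₀b⟩ : ∃ c₀, a < c₀ ∧ c₀ < c ∧ c₀ < b :=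
    ⟨(a + min c b) / 2, by linarith [lt_min hac hab],
      by linarith [min_le_left c b, lt_min hac hab], by linarith [min_le_right c b, lt_min hac hab]⟩
  have hF''int : ∀ x ∈ Ioc a b, IntervalIntegrable F'' volume x b := fun x hx =>
    (intervalIntegrable_iff_integrableOn_Ioo_of_le hx.2).2
      ((hint ((x - a) / 2) (by linarith [hx.1])).mono_set
        (Ioo_subset_Ioo_left (by linarith [hx.1])))
  have hF''bd : ∀ s ∈ Ioc a c₀, ‖F'' s‖ ≤ M * (s - a) ^ (-(3 / 2) : ℝ) := fun s hs =>
    hMc s ⟨hs.1, hs.2.trans_lt hc₀c⟩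
  obtain ⟨K, hF', hF⟩ := exists_norm_le_div_sqrt_and_norm_le_mul_sqrt hFc.continuousOn hFa
    (fun s hs => hd1 s ⟨hs.1, hs.2.trans_lt hc₀b⟩) (fun s hs => hd2 s ⟨hs.1, hs.2.trans_lt hc₀b⟩)
    (fun x hx => ((hF''int x ⟨hx.1, hx.2.trans hc₀b.le⟩).1.mono_set
      (Ioc_subset_Ioc_right hc₀b.le)).aestronglyMeasurable) hF''bd
  have hD : 0 ≤ 2 * ∫ s in c₀..b, ‖F'' s‖ :=
    mul_nonneg zero_le_two (intervalIntegral.integral_nonneg hc₀b.le fun _ _ => norm_nonneg _)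
  refine ⟨2 * K * ((c₀ - a) * √(c₀ - a)) + 2 * K * √(c₀ - a) + 2 * (K + 2 * M) / √(c₀ - a)
    + 2 * ∫ s in c₀..b, ‖F'' s‖, fun t ht => ?_⟩
  have ht0 : 0 < t := one_pos.trans_le ht
  have hδ : 0 < (c₀ - a) / t := div_pos (sub_pos.2 hac₀) ht0
  have hδc : a + (c₀ - a) / t ≤ c₀ := by linarith [div_le_self (sub_pos.2 hac₀).le ht]
  refine (norm_integral_cexp_smul_le_of_sqrt_bounds ht0 hδ hδc hc₀b hFc.continuousOn hFb hd1 hd2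
    (hF''int _ ⟨by linarith, by linarith⟩) (fun ω hω => hF ω ⟨hω.1, hω.2.trans hδc⟩)
    (by simpa using hF' _ ⟨by linarith, hδc⟩)
    (fun s hs => hF''bd s ⟨by linarith [hs.1], hs.2⟩)).trans ?_
  exact scaling_le_mul_rpow_neg_three_halves (sub_pos.2 hac₀) ht hD

/-- Jensen–Kato lemma: if `F : ℝ → B` is continuous, vanishes outside `[a,b]` and at the
endpoints, is twice differentiable on `(a,b)`, with `F''` Bochner integrable on `(a+δ, b)` for all
`δ > 0` and `‖F''(ω)‖ ≤ M (ω−a)^{−3/2}` near `a`, then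
`‖∫_a^b e^{−itω} F(ω) dω‖ = O(t^{−3/2})` as `t → +∞`. -/
theorem stmt4 {B : Type*} [NormedAddCommGroup B] [NormedSpace ℂ B] [CompleteSpace B]
    (a b : ℝ) (hab : a < b) (F F' F'' : ℝ → B) (M : ℝ)
    (hFc : Continuous F)
    (hsupp : ∀ ω : ℝ, ω ∉ Icc a b → F ω = 0)
    (hFa : F a = 0) (hFb : F b = 0)
    (hd1 : ∀ ω ∈ Ioo a b, HasDerivAt F (F' ω) ω)
    (hd2 : ∀ ω ∈ Ioo a b, HasDerivAt F' (F'' ω) ω)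
    (hint : ∀ δ : ℝ, 0 < δ → IntegrableOn F'' (Ioo (a + δ) b))
    (hM : ∃ c : ℝ, a < c ∧ ∀ ω ∈ Ioo a c, ‖F'' ω‖ ≤ M * (ω - a) ^ (-(3 / 2) : ℝ)) :
    ∃ C : ℝ, ∀ t : ℝ, 1 ≤ t →
      ‖∫ ω in a..b, Complex.exp (-Complex.I * t * ω) • F ω‖ ≤ C * t ^ (-(3 / 2) : ℝ) :=
  stmt4_general a b hab F F' F'' M hFc hFa hFb hd1 hd2 hint hM
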